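/- arXiv:2005.10696 — 2 statements merged into one kernel-verified Lean document; each statement's English description precedes it below -/
import Mathlib

section
/- For one-dimensional Gaussian distributions N(m1, σ1²) and N(m2, σ2²), the squared 2-Wasserstein distance equals (m1 − m2)² + (σ1 − σ2)². -/
open MeasureTheory ProbabilityTheory
open scoped NNReal

/-- The squared 2-Wasserstein distance between probability measures on `ℝ`,
defined via couplings. -/
noncomputable def W2sq (μ ν : Measure ℝ) : ℝ :=
  sInf {r : ℝ |
    ∃ γ : Measure (ℝ × ℝ),
      IsProbabilityMeasure γ ∧ γ.map Prod.fst = μ ∧ γ.map Prod.snd = ν ∧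
      r = ∫ p, (p.1 - p.2) ^ 2 ∂γ}

/-!
For any coupling `(X, Y)`, `E[(X - Y)²] = (E X - E Y)² + Var(X - Y)`, and Cauchy–Schwarz for the
covariance gives `Var(X - Y) ≥ (√Var X - √Var Y)²`; for Gaussian marginals this is the claimed
lower bound. The comonotone coupling `(m₁ + σ₁ Z, m₂ + σ₂ Z)` attains it, because its difference
`(m₁ - m₂) + (σ₁ - σ₂) Z` is Gaussian with mean `m₁ - m₂` and variance `(σ₁ - σ₂)²`.
-/

open Real

section Moments

variable {Ω : Type*} [MeasurableSpace Ω] {P : Measure Ω} {X Y : Ω → ℝ}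

lemma covariance_le_sqrt_variance_mul_sqrt_variance [IsFiniteMeasure P]
    (hX : MemLp X 2 P) (hY : MemLp Y 2 P) : cov[X, Y; P] ≤ √Var[X; P] * √Var[Y; P] := by
  have hquad : ∀ t : ℝ, 0 ≤ Var[X; P] * (t * t) + (-2 * cov[X, Y; P]) * t + Var[Y; P] := by
    intro t
    have h := variance_sub (hX.const_smul t) hY
    rw [variance_smul, covariance_smul_left] at h
    linarith [variance_nonneg (t • X - Y) P]
  have hdisc := discrim_le_zero hquad
  rw [discrim] at hdisc
  rw [← sqrt_mul (variance_nonneg X P)]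
  exact (le_abs_self _).trans (abs_le_sqrt (by linarith))

lemma sq_sub_sqrt_variance_le_variance_sub [IsFiniteMeasure P]
    (hX : MemLp X 2 P) (hY : MemLp Y 2 P) :
    (√Var[X; P] - √Var[Y; P]) ^ 2 ≤ Var[X - Y; P] := by
  rw [variance_sub hX hY, sub_sq, sq_sqrt (variance_nonneg _ _), sq_sqrt (variance_nonneg _ _)]
  linarith [covariance_le_sqrt_variance_mul_sqrt_variance hX hY]

lemma integral_sq_eq_sq_integral_add_variance [IsProbabilityMeasure P] (hX : MemLp X 2 P) :
    P[X ^ 2] = P[X] ^ 2 + Var[X; P] := by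
  rw [variance_eq_sub hX]
  ring

lemma sq_sub_integral_add_sq_sub_sqrt_variance_le_integral_sq_sub [IsProbabilityMeasure P]
    (hX : MemLp X 2 P) (hY : MemLp Y 2 P) :
    (P[X] - P[Y]) ^ 2 + (√Var[X; P] - √Var[Y; P]) ^ 2 ≤ P[(X - Y) ^ 2] := by
  rw [integral_sq_eq_sq_integral_add_variance (hX.sub hY),
    integral_sub' (hX.integrable one_le_two) (hY.integrable one_le_two)]
  gcongr
  exact sq_sub_sqrt_variance_le_variance_sub hX hY

end Moments

lemma sq_sub_integral_add_sq_sub_sqrt_variance_le_integral_sq_sub_of_coupling {μ ν : Measure ℝ}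
    {γ : Measure (ℝ × ℝ)} [IsProbabilityMeasure γ] (hμ : MemLp id 2 μ) (hν : MemLp id 2 ν)
    (hfst : γ.map Prod.fst = μ) (hsnd : γ.map Prod.snd = ν) :
    (∫ x, x ∂μ - ∫ x, x ∂ν) ^ 2 + (√Var[id; μ] - √Var[id; ν]) ^ 2 ≤ ∫ p, (p.1 - p.2) ^ 2 ∂γ := by
  have hX : HasLaw Prod.fst μ γ := ⟨measurable_fst.aemeasurable, hfst⟩
  have hY : HasLaw Prod.snd ν γ := ⟨measurable_snd.aemeasurable, hsnd⟩
  subst hfst hsnd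
  have hXL : MemLp Prod.fst 2 γ :=
    (memLp_map_measure_iff aestronglyMeasurable_id measurable_fst.aemeasurable).1 hμ
  have hYL : MemLp Prod.snd 2 γ :=
    (memLp_map_measure_iff aestronglyMeasurable_id measurable_snd.aemeasurable).1 hν
  rw [← hX.integral_eq, ← hY.integral_eq, ← hX.variance_eq, ← hY.variance_eq]
  exact sq_sub_integral_add_sq_sub_sqrt_variance_le_integral_sq_sub hXL hYL

lemma integral_sq_gaussianReal (m : ℝ) (v : ℝ≥0) : ∫ x, x ^ 2 ∂gaussianReal m v = m ^ 2 + v := by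
  have := integral_sq_eq_sq_integral_add_variance (memLp_id_gaussianReal (μ := m) (v := v) 2)
  simpa [integral_id_gaussianReal, variance_id_gaussianReal] using this

lemma gaussianReal_map_const_add_mul (m s : ℝ) :
    (gaussianReal 0 1).map (fun z ↦ m + s * z) = gaussianReal m (s ^ 2).toNNReal := by
  have hcomp : (fun z : ℝ ↦ m + s * z) = (m + ·) ∘ (s * ·) := rfl
  rw [hcomp, ← Measure.map_map (measurable_const_add m) (measurable_const_mul s),
    gaussianReal_map_const_mul, gaussianReal_map_const_add, mul_zero, zero_add, mul_one]
  congr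
  exact (Real.coe_toNNReal _ (sq_nonneg s)).symm

noncomputable def gaussianComonotoneCoupling (m1 m2 s1 s2 : ℝ) : Measure (ℝ × ℝ) :=
  (gaussianReal 0 1).map (fun z ↦ (m1 + s1 * z, m2 + s2 * z))

section ComonotoneCoupling

variable (m1 m2 s1 s2 : ℝ)

instance : IsProbabilityMeasure (gaussianComonotoneCoupling m1 m2 s1 s2) :=
  Measure.isProbabilityMeasure_map (by fun_prop)

lemma gaussianComonotoneCoupling_map_fst :
    (gaussianComonotoneCoupling m1 m2 s1 s2).map Prod.fst = gaussianReal m1 (s1 ^ 2).toNNReal := by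
  rw [gaussianComonotoneCoupling, Measure.map_map measurable_fst (by fun_prop)]
  exact gaussianReal_map_const_add_mul m1 s1

lemma gaussianComonotoneCoupling_map_snd :
    (gaussianComonotoneCoupling m1 m2 s1 s2).map Prod.snd = gaussianReal m2 (s2 ^ 2).toNNReal := by
  rw [gaussianComonotoneCoupling, Measure.map_map measurable_snd (by fun_prop)]
  exact gaussianReal_map_const_add_mul m2 s2

lemma integral_sq_sub_gaussianComonotoneCoupling :
    ∫ p, (p.1 - p.2) ^ 2 ∂gaussianComonotoneCoupling m1 m2 s1 s2 =
      (m1 - m2) ^ 2 + (s1 - s2) ^ 2 := by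
  have hdiff : ∀ z : ℝ, (m1 + s1 * z - (m2 + s2 * z)) ^ 2 = ((m1 - m2) + (s1 - s2) * z) ^ 2 :=
    fun z ↦ by ring
  rw [gaussianComonotoneCoupling, integral_map (by fun_prop) (by fun_prop)]
  simp only [hdiff]
  rw [← integral_map (f := fun x : ℝ ↦ x ^ 2) (by fun_prop) (by fun_prop),
    gaussianReal_map_const_add_mul, integral_sq_gaussianReal, Real.coe_toNNReal _ (sq_nonneg _)]

end ComonotoneCoupling

/-- For one-dimensional Gaussians `N(m₁,σ₁²)` and `N(m₂,σ₂²)`, the squared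
2-Wasserstein distance equals `(m₁ - m₂)² + (σ₁ - σ₂)²`. -/
theorem W2sq_gaussian_gaussian (m1 m2 : ℝ) (σ1 σ2 : ℝ≥0) :
    W2sq (gaussianReal m1 (σ1 ^ 2)) (gaussianReal m2 (σ2 ^ 2)) =
      (m1 - m2) ^ 2 + ((σ1 : ℝ) - (σ2 : ℝ)) ^ 2 := by
  have hvar (σ : ℝ≥0) : ((σ : ℝ) ^ 2).toNNReal = σ ^ 2 := by
    rw [← NNReal.coe_pow, Real.toNNReal_coe]
  refine IsLeast.csInf_eq ⟨⟨gaussianComonotoneCoupling m1 m2 σ1 σ2, inferInstance, ?_, ?_, ?_⟩, ?_⟩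
  · rw [gaussianComonotoneCoupling_map_fst, hvar]
  · rw [gaussianComonotoneCoupling_map_snd, hvar]
  · rw [integral_sq_sub_gaussianComonotoneCoupling]
  · rintro _ ⟨γ, hγ, hfst, hsnd, rfl⟩
    simpa [integral_id_gaussianReal, variance_id_gaussianReal] using
      sq_sub_integral_add_sq_sub_sqrt_variance_le_integral_sq_sub_of_coupling
        (memLp_id_gaussianReal 2) (memLp_id_gaussianReal 2) hfst hsnd
end

section
/- Log-barrier (interior point) consistency: let f, g : ℝ^n → ℝ be continuous on a compact set K, with F = {θ ∈ K : g(θ) ≥ 0} nonempty and cl({θ ∈ K : g(θ) > 0}) = F. For α > 0 let θ_α maximize f(θ) + α·log g(θ) over the interior region {θ ∈ K : g(θ) > 0}, assumed attained. Then as α → 0⁺, every limit point θ* of θ_α lies in F and satisfies f(θ*) = max_{θ ∈ F} f(θ). -/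
open Filter Topology

/-- Log-barrier (interior point) consistency: if for each barrier parameter `α > 0`
the point `θα α` maximizes `f + α·log g` over the strictly feasible region
`{θ ∈ K | g θ > 0}`, and the closure of the strictly feasible region is the feasible
set `F`, then every limit point of `θα` as `α → 0⁺` lies in `F` and maximizes `f`
over `F`. -/
theorem log_barrier_consistency {n : ℕ}
    (f g : EuclideanSpace ℝ (Fin n) → ℝ)
    (hf : Continuous f) (hg : Continuous g)
    (K : Set (EuclideanSpace ℝ (Fin n))) (hK : IsCompact K)
    (F : Set (EuclideanSpace ℝ (Fin n))) (hF : F = {θ ∈ K | 0 ≤ g θ})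
    (hFne : F.Nonempty)
    (hcl : closure {θ ∈ K | 0 < g θ} = F)
    (θα : ℝ → EuclideanSpace ℝ (Fin n))
    (hmem : ∀ α > (0 : ℝ), θα α ∈ {θ ∈ K | 0 < g θ})
    (hmax : ∀ α > (0 : ℝ), ∀ θ ∈ {θ ∈ K | 0 < g θ},
      f θ + α * Real.log (g θ) ≤ f (θα α) + α * Real.log (g (θα α)))
    (θstar : EuclideanSpace ℝ (Fin n))
    (hlim : MapClusterPt θstar (𝓝[>] (0 : ℝ)) θα) :
    θstar ∈ F ∧ ∀ θ ∈ F, f θ ≤ f θstar := by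
  set S : Set (EuclideanSpace ℝ (Fin n)) := {θ ∈ K | 0 < g θ} with hSdef
  have hS1 : θα 1 ∈ S := hmem 1 one_pos
  -- θstar ∈ F
  have hmap : map θα (𝓝[>] (0:ℝ)) ≤ 𝓟 S := by
    rw [le_principal_iff, mem_map]
    filter_upwards [self_mem_nhdsWithin] with α hα using hmem α hα
  have hmemF : θstar ∈ F := by
    rw [← hcl]
    exact mem_closure_iff_clusterPt.mpr (ClusterPt.mono hlim hmap)
  refine ⟨hmemF, ?_⟩
  -- bound on g over K
  obtain ⟨xm, hxmK, hxm⟩ := hK.exists_isMaxOn ⟨θα 1, hS1.1⟩ hg.continuousOn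
  set C : ℝ := g xm with hCdef
  -- extract ultrafilter
  obtain ⟨U, hUle, hUtend⟩ := mapClusterPt_iff_ultrafilter.mp hlim
  have hkey : ∀ θ ∈ S, f θ ≤ f θstar := by
    intro θ hθ
    have hα0 : Tendsto (fun α : ℝ => α) (U : Filter ℝ) (𝓝 0) :=
      (hUle.trans nhdsWithin_le_nhds)
    have htend : Tendsto (fun α => f (θα α) + α * (Real.log C - Real.log (g θ)))
        (U : Filter ℝ) (𝓝 (f θstar + 0 * (Real.log C - Real.log (g θ)))) :=
      ((hf.tendsto θstar).comp hUtend).add (hα0.mul_const _)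
    rw [zero_mul, add_zero] at htend
    refine ge_of_tendsto htend ?_
    have hpos : ∀ᶠ α in (U : Filter ℝ), 0 < α := hUle self_mem_nhdsWithin
    filter_upwards [hpos] with α hα
    have h1 := hmax α hα θ hθ
    have hgα := (hmem α hα).2
    have h2 : Real.log (g (θα α)) ≤ Real.log C :=
      Real.log_le_log hgα (hxm (hmem α hα).1)
    have h3 := mul_le_mul_of_nonneg_left h2 hα.le
    have h4 := mul_sub α (Real.log C) (Real.log (g θ))
    linarith
  intro θ hθ
  rw [← hcl] at hθ
  exact closure_minimal (fun x hx => hkey x hx)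
    (isClosed_le hf continuous_const) hθ
end
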